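/- Let G be a group, R an integral domain, with elements T_r ∈ G (r ∈ R nonzero) and V^n ∈ G (n ∈ R) satisfying T_r T_s = T_{rs}, T_r T_s = T_s T_r, and V^p T_q = T_q V^{pq}. Then for all nonzero p₂, q₁, q₂ ∈ R and p₁ ∈ R: (T_{q₁} V^{p₁} T_{q₁}⁻¹)(T_{p₂} T_{q₂}⁻¹) = (T_{p₂} T_{q₂}⁻¹)(T_{q₁q₂} V^{p₁p₂} T_{q₁q₂}⁻¹). -/
import Mathlib


/-- Covariance computation in a group `G` for a unitary representation of an integral
domain `R`:
`(T_{q₁} V^{p₁} T_{q₁}⁻¹)(T_{p₂} T_{q₂}⁻¹) = (T_{p₂} T_{q₂}⁻¹)(T_{q₁q₂} V^{p₁p₂} T_{q₁q₂}⁻¹)`. -/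
theorem stmt13 (G : Type*) [Group G] (R : Type*) [CommRing R] [IsDomain R]
    (T : R → G) (V : R → G)
    (hT : ∀ r s : R, r ≠ 0 → s ≠ 0 → T r * T s = T (r * s))
    (hTc : ∀ r s : R, r ≠ 0 → s ≠ 0 → T r * T s = T s * T r)
    (hcov : ∀ p q : R, q ≠ 0 → V p * T q = T q * V (p * q)) :
    ∀ (p₂ q₁ q₂ : R), p₂ ≠ 0 → q₁ ≠ 0 → q₂ ≠ 0 → ∀ p₁ : R,
      (T q₁ * V p₁ * (T q₁)⁻¹) * (T p₂ * (T q₂)⁻¹) =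
        (T p₂ * (T q₂)⁻¹) * (T (q₁ * q₂) * V (p₁ * p₂) * (T (q₁ * q₂))⁻¹) := by
  intro p₂ q₁ q₂ hp₂ hq₁ hq₂ p₁
  have c1 : Commute (T q₁) (T p₂) := hTc _ _ hq₁ hp₂
  have hq12 : T q₁ * T q₂ = T (q₁ * q₂) := hT _ _ hq₁ hq₂
  have c2 : (T q₂)⁻¹ * T (q₁ * q₂) = T q₁ := by
    rw [← hq12, hTc _ _ hq₁ hq₂]; group
  have lhs : T q₁ * V p₁ * (T q₁)⁻¹ * (T p₂ * (T q₂)⁻¹)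
      = T p₂ * (T q₁ * V (p₁ * p₂) * (T (q₁ * q₂))⁻¹) := by
    have e1 : T q₁ * V p₁ * (T q₁)⁻¹ * (T p₂ * (T q₂)⁻¹)
        = T q₁ * (V p₁ * ((T q₁)⁻¹ * T p₂)) * (T q₂)⁻¹ := by group
    rw [e1, c1.inv_left.eq]
    have e2 : T q₁ * (V p₁ * (T p₂ * (T q₁)⁻¹)) * (T q₂)⁻¹
        = T q₁ * (V p₁ * T p₂) * ((T q₁)⁻¹ * (T q₂)⁻¹) := by group
    rw [e2, hcov _ _ hp₂, ← mul_inv_rev, hTc _ _ hq₂ hq₁, hq12]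
    have e3 : T q₁ * (T p₂ * V (p₁ * p₂)) * (T (q₁ * q₂))⁻¹
        = (T q₁ * T p₂) * (V (p₁ * p₂) * (T (q₁ * q₂))⁻¹) := by group
    rw [e3, c1.eq]
    group
  rw [lhs]
  have rhs : T p₂ * (T q₂)⁻¹ * (T (q₁ * q₂) * V (p₁ * p₂) * (T (q₁ * q₂))⁻¹)
      = T p₂ * (((T q₂)⁻¹ * T (q₁ * q₂)) * V (p₁ * p₂) * (T (q₁ * q₂))⁻¹) := by group
  rw [rhs, c2]
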